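/- Let n ≥ 1, 0 ≤ t < 1, and 0 < ε < r. Define ρ₋(x) := ‖x‖ − t·xₙ on ℝⁿ (Euclidean norm minus t times the last coordinate), and let ωₙ denote the Lebesgue measure of the Euclidean unit ball in ℝⁿ. Then ∫_{{x ∈ ℝⁿ : ε < ρ₋(x) < r}} ρ₋(x)^{−n} dx = n·ωₙ·(1−t²)^{−(n+1)/2}·log(r/ε). -/

import Mathlib

/-!
The sublevel set `{ρ₋ < u}` is an ellipsoid: it is the preimage of a Euclidean ball of radius
`u / √(1 - t²)` under the linear map scaling the last coordinate by `√(1 - t²)`, so its volume is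
`C uⁿ` with `C = ωₙ (1 - t²)^(-(n+1)/2)`. Hence the push-forward of Lebesgue measure under `ρ₋`
has density `n C uⁿ⁻¹` on `[ε, ∞)`, and integrating `u⁻ⁿ` against it over `(ε, r)` gives
`n C log (r / ε)`.
-/

open MeasureTheory Set Metric

lemma sub_mul_lt_iff_sq_lt {t a q u : ℝ} (ht : |t| < 1) (hu : 0 < u) (ha : |a| ≤ q) :
    q - t * a < u ↔ q ^ 2 < (u + t * a) ^ 2 := by
  have hta : |t * a| < q + u := by
    rw [abs_mul]; nlinarith [abs_nonneg t, abs_nonneg a]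
  rw [sq_lt_sq, abs_of_nonneg ((abs_nonneg a).trans ha)]
  refine ⟨fun h => (by linarith : q < u + t * a).trans_le (le_abs_self _), fun h => ?_⟩
  rcases abs_cases (u + t * a) with ⟨h', _⟩ | ⟨h', _⟩ <;> rw [h'] at h
  · linarith
  · linarith [neg_abs_le (t * a)]

lemma sub_mul_lt_iff_ellipsoid {t a q u : ℝ} (ht : |t| < 1) (hu : 0 < u) (ha : |a| ≤ q) :
    q - t * a < u ↔ (1 - t ^ 2) * (q ^ 2 - a ^ 2) + ((1 - t ^ 2) * a - t * u) ^ 2 < u ^ 2 := by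
  have hs : 0 < 1 - t ^ 2 := sub_pos.2 ((sq_lt_one_iff_abs_lt_one t).2 ht)
  rw [sub_mul_lt_iff_sq_lt ht hu ha, ← sub_neg, ← sub_neg (b := u ^ 2),
    show (1 - t ^ 2) * (q ^ 2 - a ^ 2) + ((1 - t ^ 2) * a - t * u) ^ 2 - u ^ 2
      = (1 - t ^ 2) * (q ^ 2 - (u + t * a) ^ 2) by ring]
  exact ⟨mul_neg_of_pos_of_neg hs, fun h => neg_of_mul_neg_right h hs.le⟩

section Ellipsoid

variable {ι : Type*} [Fintype ι]

lemma norm_add_smul_single_sq [DecidableEq ι] (x : EuclideanSpace ℝ ι) (i : ι) (b : ℝ) :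
    ‖x + b • EuclideanSpace.single i 1‖ ^ 2 = ‖x‖ ^ 2 - x i ^ 2 + (x i + b) ^ 2 := by
  rw [norm_add_sq_real, inner_smul_right, EuclideanSpace.inner_single_right, norm_smul,
    PiLp.norm_single]
  simp only [conj_trivial, one_mul, norm_one, mul_one, Real.norm_eq_abs, sq_abs]
  ring

lemma setOf_norm_sub_mul_apply_lt_eq_preimage_ball [DecidableEq ι] {t u : ℝ} (i : ι)
    (ht : |t| < 1) (hu : 0 < u) :
    {x : EuclideanSpace ℝ ι | ‖x‖ - t * x i < u} =
      Matrix.toEuclideanLin (Matrix.diagonal (Function.update 1 i √(1 - t ^ 2))) ⁻¹'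
        ball ((t * u / √(1 - t ^ 2)) • EuclideanSpace.single i 1) (u / √(1 - t ^ 2)) := by
  have h1 : 0 < 1 - t ^ 2 := sub_pos.2 ((sq_lt_one_iff_abs_lt_one t).2 ht)
  set s := √(1 - t ^ 2)
  have hs2 : s ^ 2 = 1 - t ^ 2 := Real.sq_sqrt h1.le
  have hs : 0 < s := Real.sqrt_pos.2 h1
  ext x
  have hLx : Matrix.toEuclideanLin (Matrix.diagonal (Function.update 1 i s)) x -
      (t * u / s) • EuclideanSpace.single i 1 =
        x + ((s - 1) * x i - t * u / s) • EuclideanSpace.single i 1 := by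
    ext j
    rcases eq_or_ne j i with rfl | hj
    · simp [Matrix.mulVec_diagonal]
      ring
    · simp [Matrix.mulVec_diagonal, hj]
  rw [mem_ofPred_eq, mem_preimage, mem_ball, dist_eq_norm, hLx,
    ← pow_lt_pow_iff_left₀ (norm_nonneg _) (by positivity) two_ne_zero, norm_add_smul_single_sq,
    sub_mul_lt_iff_ellipsoid ht hu (by simpa using PiLp.norm_apply_le x i), ← hs2,
    ← mul_lt_mul_iff_left₀ (by positivity : 0 < s ^ 2)]
  field_simp
  ring_nf

lemma volume_setOf_norm_sub_mul_apply_lt {t u : ℝ} (i : ι) (ht : |t| < 1) (hu : 0 < u) :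
    volume {x : EuclideanSpace ℝ ι | ‖x‖ - t * x i < u} =
      ENNReal.ofReal ((volume (ball (0 : EuclideanSpace ℝ ι) 1)).toReal *
        (1 - t ^ 2) ^ (-(((Fintype.card ι : ℝ) + 1) / 2)) * u ^ Fintype.card ι) := by
  classical
  have : Nonempty ι := ⟨i⟩
  have h1 : 0 < 1 - t ^ 2 := sub_pos.2 ((sq_lt_one_iff_abs_lt_one t).2 ht)
  have hs : 0 < √(1 - t ^ 2) := Real.sqrt_pos.2 h1
  have hdet : LinearMap.det (Matrix.toEuclideanLin
      (Matrix.diagonal (Function.update 1 i √(1 - t ^ 2)))) = √(1 - t ^ 2) := by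
    rw [Matrix.toEuclideanLin_eq_toLin_orthonormal, LinearMap.det_toLin, Matrix.det_diagonal,
      Finset.prod_update_of_mem (Finset.mem_univ i)]
    simp
  have hpow : (1 - t ^ 2) ^ (-(((Fintype.card ι : ℝ) + 1) / 2)) =
      (√(1 - t ^ 2) ^ (Fintype.card ι + 1))⁻¹ := by
    rw [Real.sqrt_eq_rpow, ← Real.rpow_natCast ((1 - t ^ 2) ^ (1 / 2 : ℝ)) (Fintype.card ι + 1),
      ← Real.rpow_mul h1.le, ← Real.rpow_neg h1.le]
    push_cast
    ring_nf
  rw [setOf_norm_sub_mul_apply_lt_eq_preimage_ball i ht hu,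
    Measure.addHaar_preimage_linearMap _ (by rw [hdet]; exact hs.ne'),
    Measure.addHaar_ball _ _ (by positivity), finrank_euclideanSpace, hdet, hpow,
    ← ENNReal.ofReal_toReal (measure_ball_lt_top (x := (0 : EuclideanSpace ℝ ι)) (r := 1)).ne,
    ← ENNReal.ofReal_mul (by positivity), ← ENNReal.ofReal_mul (by positivity),
    ENNReal.toReal_ofReal ENNReal.toReal_nonneg, abs_of_pos (inv_pos.2 hs)]
  congr 1
  rw [div_pow]
  field_simp
  ring

end Ellipsoid

section Distribution

variable {α : Type*} [MeasurableSpace α] {μ : Measure α} {f : α → ℝ} {C d : ℝ}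

lemma measure_preimage_Ico_of_measure_lt_eq (hf : Measurable f) (hC : 0 ≤ C)
    (hμf : ∀ u, 0 < u → μ {x | f x < u} = ENNReal.ofReal (C * u ^ d))
    {p q : ℝ} (hp : 0 < p) (hpq : p ≤ q) :
    μ (f ⁻¹' Ico p q) = ENNReal.ofReal (C * q ^ d - C * p ^ d) := by
  have hdiff : f ⁻¹' Ico p q = {x | f x < q} \ {x | f x < p} := by
    ext x; simp [and_comm]
  have hsub : {x | f x < p} ⊆ {x | f x < q} := fun x hx => lt_of_lt_of_le hx hpq
  rw [hdiff, measure_sdiff hsub (measurableSet_lt hf measurable_const).nullMeasurableSet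
      (by rw [hμf p hp]; exact ENNReal.ofReal_ne_top),
    hμf q (hp.trans_le hpq), hμf p hp, ENNReal.ofReal_sub _ (by positivity)]

lemma withDensity_mul_rpow_Ico (hC : 0 ≤ C) (hd : 0 < d) {p q : ℝ} (hp : 0 < p) (hpq : p ≤ q) :
    volume.withDensity (fun u => ENNReal.ofReal (d * C * u ^ (d - 1))) (Ico p q) =
      ENNReal.ofReal (C * q ^ d - C * p ^ d) := by
  have hcont : ContinuousOn (fun u : ℝ => d * C * u ^ (d - 1)) (Icc p q) :=
    continuousOn_const.mul <| continuousOn_id.rpow_const fun u hu => Or.inl (hp.trans_le hu.1).ne'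
  have hint : ∫ u in p..q, d * C * u ^ (d - 1) = C * q ^ d - C * p ^ d := by
    rw [intervalIntegral.integral_const_mul,
      integral_rpow (Or.inr ⟨by linarith, notMem_uIcc_of_lt hp (hp.trans_le hpq)⟩), sub_add_cancel]
    field_simp [hd.ne']
  rw [withDensity_apply _ measurableSet_Ico, ← hint, intervalIntegral.integral_of_le hpq,
    ← integral_Ico_eq_integral_Ioc, ofReal_integral_eq_lintegral_ofReal
      ((hcont.integrableOn_Icc).mono_set Ico_subset_Icc_self)]
  filter_upwards [ae_restrict_mem measurableSet_Ico] with u hu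
  have := (hp.trans_le hu.1).le
  positivity

lemma map_restrict_Ici_eq_withDensity (hf : Measurable f) (hC : 0 ≤ C) (hd : 0 < d)
    (hμf : ∀ u, 0 < u → μ {x | f x < u} = ENNReal.ofReal (C * u ^ d)) {ε : ℝ} (hε : 0 < ε) :
    (μ.map f).restrict (Ici ε) =
      (volume.withDensity fun u => ENNReal.ofReal (d * C * u ^ (d - 1))).restrict (Ici ε) := by
  have hIco : ∀ p q, 0 < p → μ.map f (Ico p q) =
      volume.withDensity (fun u => ENNReal.ofReal (d * C * u ^ (d - 1))) (Ico p q) := by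
    intro p q hp
    rcases le_total q p with hqp | hpq
    · simp [Ico_eq_empty_of_le hqp]
    · rw [Measure.map_apply hf measurableSet_Ico,
        measure_preimage_Ico_of_measure_lt_eq hf hC hμf hp hpq,
        withDensity_mul_rpow_Ico hC hd hp hpq]
  have hε' : ∀ a, 0 < a ⊔ ε := fun a => hε.trans_le le_sup_right
  refine Measure.ext_of_Ico' _ _ (fun a b _ => ?_) (fun a b _ => ?_) <;>
    simp only [Measure.restrict_apply measurableSet_Ico, Ico_inter_Ici]
  · rcases le_total b (a ⊔ ε) with hb | hb
    · simp [Ico_eq_empty_of_le hb]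
    · rw [Measure.map_apply hf measurableSet_Ico,
        measure_preimage_Ico_of_measure_lt_eq hf hC hμf (hε' a) hb]
      exact ENNReal.ofReal_ne_top
  · exact hIco _ _ (hε' a)

theorem setIntegral_rpow_neg_of_measure_lt_eq (hf : Measurable f) (hC : 0 ≤ C) (hd : 0 < d)
    (hμf : ∀ u, 0 < u → μ {x | f x < u} = ENNReal.ofReal (C * u ^ d))
    {ε r : ℝ} (hε : 0 < ε) (hεr : ε ≤ r) :
    ∫ x in {x | ε < f x ∧ f x < r}, f x ^ (-d) ∂μ = d * C * Real.log (r / ε) := by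
  have hIoo : Ioo ε r ⊆ Ici ε := Ioo_subset_Ioi_self.trans Ioi_subset_Ici_self
  have hdens : Measurable fun u : ℝ => (d * C * u ^ (d - 1)).toNNReal :=
    (measurable_const.mul (measurable_id.pow_const _)).real_toNNReal
  calc ∫ x in {x | ε < f x ∧ f x < r}, f x ^ (-d) ∂μ
      = ∫ u in Ioo ε r, u ^ (-d) ∂(μ.map f).restrict (Ici ε) := by
        rw [Measure.restrict_restrict measurableSet_Ioo, inter_eq_left.2 hIoo,
          setIntegral_map measurableSet_Ioo (by fun_prop) hf.aemeasurable]
        rfl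
    _ = ∫ u in Ioo ε r, (d * C * u ^ (d - 1)).toNNReal • u ^ (-d) := by
        rw [map_restrict_Ici_eq_withDensity hf hC hd hμf hε,
          Measure.restrict_restrict measurableSet_Ioo, inter_eq_left.2 hIoo]
        simp_rw [ENNReal.ofReal]
        exact setIntegral_withDensity_eq_setIntegral_smul hdens _ measurableSet_Ioo
    _ = ∫ u in ε..r, d * C * u⁻¹ := by
        rw [intervalIntegral.integral_of_le hεr, ← integral_Ioc_eq_integral_Ioo]
        refine setIntegral_congr_fun measurableSet_Ioc fun u hu => ?_
        have hu0 : 0 < u := hε.trans hu.1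
        rw [NNReal.smul_def, Real.coe_toNNReal _ (by positivity), smul_eq_mul, mul_assoc,
          ← Real.rpow_add hu0, show d - 1 + -d = -1 by ring, Real.rpow_neg_one]
    _ = d * C * Real.log (r / ε) := by
        rw [intervalIntegral.integral_const_mul, integral_inv_of_pos hε (hε.trans_le hεr)]

end Distribution

/-- **The logarithmic integral (5.7)–(5.11)** from the proof of Proposition 5.1:
for the backward distance `ρ₋(x) = ‖x‖ − t xₙ` of the Randers metric `F(y) = ‖y‖ + t yₙ`
on `ℝⁿ` (`0 ≤ t < 1`) and `0 < ε < r`,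
`∫_{ε < ρ₋ < r} ρ₋^{−n} dx = n ωₙ (1−t²)^{−(n+1)/2} log(r/ε)`,
where `ωₙ` is the Lebesgue measure of the Euclidean unit ball. -/
theorem stmt_14 (n : ℕ) (hn : 1 ≤ n) (t ε r : ℝ) (ht0 : 0 ≤ t) (ht1 : t < 1)
    (hε : 0 < ε) (hεr : ε < r)
    (ρm : EuclideanSpace ℝ (Fin n) → ℝ)
    (hρm : ∀ x : EuclideanSpace ℝ (Fin n), ρm x = ‖x‖ - t * x ⟨n - 1, by omega⟩) :
    ∫ x in {x : EuclideanSpace ℝ (Fin n) | ε < ρm x ∧ ρm x < r}, ρm x ^ (-(n : ℝ)) =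
      (n : ℝ) * (volume (Metric.ball (0 : EuclideanSpace ℝ (Fin n)) 1)).toReal *
        (1 - t ^ 2) ^ (-(((n : ℝ) + 1) / 2)) * Real.log (r / ε) := by
  obtain rfl : ρm = fun x => ‖x‖ - t * x ⟨n - 1, by omega⟩ := funext hρm
  have ht : |t| < 1 := abs_lt.2 ⟨by linarith, ht1⟩
  have h1 : 0 < 1 - t ^ 2 := sub_pos.2 ((sq_lt_one_iff_abs_lt_one t).2 ht)
  have hvol (u : ℝ) (hu : 0 < u) :=
    volume_setOf_norm_sub_mul_apply_lt (⟨n - 1, by omega⟩ : Fin n) ht hu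
  rw [Fintype.card_fin] at hvol
  rw [setIntegral_rpow_neg_of_measure_lt_eq (by fun_prop) ?_ (by positivity)
    (fun u hu => by rw [Real.rpow_natCast, hvol u hu]) hε hεr.le]
  · ring
  · exact mul_nonneg ENNReal.toReal_nonneg (Real.rpow_nonneg h1.le _)
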